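/- arXiv:1902.07548 — 5 statements merged into one kernel-verified Lean document; each statement's English description precedes it below -/
import Mathlib

section
/- Let n ≥ 2 and let Kₙ be the complete graph on n vertices. For real parameters q > 0, q ≠ 1 and r ≠ 1, the Sharma–Mittal entropy of Kₙ based on the Laplacian satisfies H_{q,r}(Kₙ) = (1/(1−r))·[(n−1)^{1−r} − 1]. -/
/-! The Laplacian of `Kₙ` is `n • 1 - J` with `J * J = n • J`, so `L * L = n • L` and every
Laplacian eigenvalue is `0` or `n`; dividing by the degree sum `n (n - 1)`, every density
eigenvalue `γ` is `0` or `a = 1 / (n - 1)`. For such `γ`, `γ ^ q = γ * a ^ (q - 1)`, and the `γ`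
sum to `1` (the trace of `L` is the degree sum), so `∑ γ ^ q = a ^ (q - 1) = (n - 1) ^ (1 - q)`. -/

open Finset

namespace SMG

variable {V : Type*} [Fintype V] [DecidableEq V]

/-- The degree sum of a graph. -/
def degSum (G : SimpleGraph V) [DecidableRel G.Adj] : ℕ := ∑ v, G.degree v

/-- The Laplacian matrix of a simple graph is Hermitian. -/
lemma lap_isHermitian (G : SimpleGraph V) [DecidableRel G.Adj] :
    (G.lapMatrix ℝ).IsHermitian :=
  (SimpleGraph.posSemidef_lapMatrix ℝ G).isHermitian

/-- The eigenvalues (with multiplicity) of the density matrix `ρ_L(G) = L(G)/d`,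
namely `γ v = λ v / d`. -/
noncomputable def lapDensityEigen (G : SimpleGraph V) [DecidableRel G.Adj] : V → ℝ :=
  fun v => (lap_isHermitian G).eigenvalues v / (degSum G : ℝ)

/-- Sharma–Mittal entropy of a graph based on its (combinatorial) Laplacian:
`H_{q,r}(G) = (1/(1-r)) * ((Σ γᵢ^q)^((1-r)/(1-q)) - 1)` with real powers. -/
noncomputable def lapSM (G : SimpleGraph V) [DecidableRel G.Adj] (q r : ℝ) : ℝ :=
  (1 / (1 - r)) *
    ((∑ v, lapDensityEigen G v ^ q) ^ ((1 - r) / (1 - q)) - 1)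

end SMG

open Matrix Polynomial

theorem Matrix.IsHermitian.eigenvalues_eq_zero_or_eq_of_mul_self_eq_smul
    {𝕜 n : Type*} [RCLike 𝕜] [Fintype n] [DecidableEq n] {A : Matrix n n 𝕜}
    (hA : A.IsHermitian) {c : ℝ} (h : A * A = c • A) (i : n) :
    hA.eigenvalues i = 0 ∨ hA.eigenvalues i = c := by
  -- makes the matrix ring nontrivial, so that `spectrum ℝ 0 = {0}`
  have : Nonempty n := ⟨i⟩
  have hannih : aeval A (X ^ 2 - C c * X) = 0 := by
    simp [sq, h, Algebra.smul_def]
  have hroot := spectrum.subset_polynomial_aeval A (X ^ 2 - C c * X)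
    ⟨_, hA.eigenvalues_mem_spectrum_real i, rfl⟩
  rw [hannih] at hroot
  have : hA.eigenvalues i * (hA.eigenvalues i - c) = 0 := by
    simp only [spectrum.zero_eq, Set.mem_singleton_iff, eval_sub, eval_pow, eval_X, eval_mul,
      eval_C] at hroot
    linear_combination hroot
  simpa [sub_eq_zero] using this

theorem Real.rpow_eq_mul_rpow_sub_one_of_eq_zero_or_eq {x a q : ℝ} (ha : a ≠ 0) (hq : q ≠ 0)
    (hx : x = 0 ∨ x = a) : x ^ q = x * a ^ (q - 1) := by
  rcases hx with rfl | rfl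
  · simp [Real.zero_rpow hq]
  · rw [Real.rpow_sub_one ha, mul_div_cancel₀ _ ha]

namespace SimpleGraph

variable {V : Type*} [Fintype V] [DecidableEq V]

theorem trace_lapMatrix (R : Type*) [Ring R] (G : SimpleGraph V) [DecidableRel G.Adj] :
    (G.lapMatrix R).trace = ∑ v, (G.degree v : R) := by
  simp [lapMatrix, degMatrix, trace_sub, trace_adjMatrix]

theorem lapMatrix_top (R : Type*) [Ring R] :
    (⊤ : SimpleGraph V).lapMatrix R = (Fintype.card V : R) • 1 - of 1 := by
  ext i j
  have : Nonempty V := ⟨i⟩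
  rcases eq_or_ne i j with rfl | hij
  · simp [lapMatrix, degMatrix, Nat.cast_pred Fintype.card_pos]
  · simp [lapMatrix, degMatrix, hij]

theorem lapMatrix_top_mul_self (R : Type*) [CommRing R] :
    (⊤ : SimpleGraph V).lapMatrix R * (⊤ : SimpleGraph V).lapMatrix R =
      (Fintype.card V : R) • (⊤ : SimpleGraph V).lapMatrix R := by
  have hJ : (of 1 : Matrix V V R) * of 1 = (Fintype.card V : R) • of 1 := by
    ext i j
    simp [mul_apply]
  rw [lapMatrix_top, sub_mul, mul_sub, mul_sub, hJ, smul_sub]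
  simp only [smul_mul_assoc, mul_smul_comm, Matrix.one_mul, Matrix.mul_one]
  abel

end SimpleGraph

namespace SMG

variable {V : Type*} [Fintype V] [DecidableEq V]

theorem degSum_top : degSum (⊤ : SimpleGraph V) = Fintype.card V * (Fintype.card V - 1) := by
  simp [degSum]

theorem sum_lapDensityEigen (G : SimpleGraph V) [DecidableRel G.Adj] (hG : degSum G ≠ 0) :
    ∑ v, lapDensityEigen G v = 1 := by
  have htrace := (lap_isHermitian G).trace_eq_sum_eigenvalues
  rw [SimpleGraph.trace_lapMatrix] at htrace
  simp only [RCLike.ofReal_real_eq_id, id] at htrace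
  unfold lapDensityEigen
  rw [← sum_div, ← htrace, ← Nat.cast_sum]
  exact div_self (Nat.cast_ne_zero.2 hG)

theorem lapDensityEigen_top_eq_zero_or_eq (v : V) :
    lapDensityEigen (⊤ : SimpleGraph V) v = 0 ∨
      lapDensityEigen (⊤ : SimpleGraph V) v = ((Fintype.card V : ℝ) - 1)⁻¹ := by
  have : Nonempty V := ⟨v⟩
  have hcard : (Fintype.card V : ℝ) ≠ 0 := by exact_mod_cast Fintype.card_ne_zero
  have hdeg : (degSum (⊤ : SimpleGraph V) : ℝ) = Fintype.card V * (Fintype.card V - 1) := by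
    rw [degSum_top, Nat.cast_mul, Nat.cast_pred Fintype.card_pos]
  rcases (lap_isHermitian _).eigenvalues_eq_zero_or_eq_of_mul_self_eq_smul
    (SimpleGraph.lapMatrix_top_mul_self ℝ) v with h | h
  · left
    rw [lapDensityEigen, h, zero_div]
  · right
    rw [lapDensityEigen, h, hdeg, div_mul_cancel_left₀ hcard]

theorem lapSM_completeGraph_general (n : ℕ) (hn : 2 ≤ n) (q r : ℝ)
    (hq0 : 0 < q) (hq1 : q ≠ 1) :
    lapSM (⊤ : SimpleGraph (Fin n)) q r =
      (1 / (1 - r)) * (((n : ℝ) - 1) ^ (1 - r) - 1) := by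
  have hn1 : (0 : ℝ) < n - 1 := by
    have : (2 : ℝ) ≤ n := by exact_mod_cast hn
    linarith
  have hd : degSum (⊤ : SimpleGraph (Fin n)) ≠ 0 := by
    rw [degSum_top, Fintype.card_fin]
    exact Nat.mul_ne_zero (by omega) (by omega)
  have hγ := lapDensityEigen_top_eq_zero_or_eq (V := Fin n)
  rw [Fintype.card_fin] at hγ
  have hpow : ∑ v, lapDensityEigen (⊤ : SimpleGraph (Fin n)) v ^ q = ((n : ℝ) - 1) ^ (1 - q) :=
    calc ∑ v, lapDensityEigen (⊤ : SimpleGraph (Fin n)) v ^ q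
        = (∑ v, lapDensityEigen (⊤ : SimpleGraph (Fin n)) v) * (((n : ℝ) - 1)⁻¹) ^ (q - 1) := by
          rw [sum_mul]
          exact sum_congr rfl fun v _ =>
            Real.rpow_eq_mul_rpow_sub_one_of_eq_zero_or_eq (inv_ne_zero hn1.ne') hq0.ne' (hγ v)
      _ = ((n : ℝ) - 1) ^ (1 - q) := by
          rw [sum_lapDensityEigen _ hd, one_mul, Real.inv_rpow hn1.le, ← Real.rpow_neg hn1.le,
            neg_sub]
  rw [lapSM, hpow, ← Real.rpow_mul hn1.le, mul_div_cancel₀ _ (sub_ne_zero.2 hq1.symm)]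

/-- Sharma–Mittal entropy of the complete graph `Kₙ` (`n ≥ 2`) based on the Laplacian:
`H_{q,r}(Kₙ) = (1/(1−r)) · ((n−1)^{1−r} − 1)`. -/
theorem lapSM_completeGraph (n : ℕ) (hn : 2 ≤ n) (q r : ℝ)
    (hq0 : 0 < q) (hq1 : q ≠ 1) (hr : r ≠ 1) :
    lapSM (⊤ : SimpleGraph (Fin n)) q r =
      (1 / (1 - r)) * (((n : ℝ) - 1) ^ (1 - r) - 1) :=
  lapSM_completeGraph_general n hn q r hq0 hq1

end SMG
end

section
/- Let G be a finite simple graph on n vertices with at least one edge, degree sum d, and let M = max{deg(u) + deg(v) : {u,v} an edge of G}. For real parameters q with 0 < q < 1 and r ≠ 1, the Sharma–Mittal entropy of G based on the Laplacian satisfies H_{q,r}(G) ≤ (1/(1−r))·[(n·(M/d)^q)^{(1−r)/(1−q)} − 1]. -/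
/-!
Every Laplacian eigenvalue is at most `M`: for an edge `ab`, Cauchy–Schwarz gives
`(x a - x b)² ≤ (M / deg a) x a² + (M / deg b) x b²`, and summing over the edges bounds the
Rayleigh quotient `xᵀ L x / xᵀ x` by `M`. Hence every `γᵢ ≤ M / d` and `∑ γᵢ ^ q ≤ n (M / d) ^ q`,
while `∑ γᵢ ^ q > 0` because `∑ λᵢ = trace L = d > 0`. Finally, for `q < 1` the prefactor
`1 / (1 - r)` and the exponent `(1 - r) / (1 - q)` have the same sign, so the entropy is a
nondecreasing function of `∑ γᵢ ^ q`.
-/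

open Finset

namespace SMG

variable {V : Type*} [Fintype V] [DecidableEq V]

open Matrix

lemma sq_sub_le_of_add_le {a b p s M : ℝ} (hp : 0 < p) (hs : 0 < s) (hM : p + s ≤ M) :
    (a - b) ^ 2 ≤ M / p * a ^ 2 + M / s * b ^ 2 := by
  have key : (p + s) / p * a ^ 2 + (p + s) / s * b ^ 2 - (a - b) ^ 2
      = (s * a + p * b) ^ 2 / (p * s) := by
    field_simp
    ring
  calc (a - b) ^ 2 ≤ (p + s) / p * a ^ 2 + (p + s) / s * b ^ 2 := by
        rw [← sub_nonneg, key]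
        positivity
    _ ≤ M / p * a ^ 2 + M / s * b ^ 2 := by gcongr

lemma dotProduct_lapMatrix_mulVec_le (G : SimpleGraph V) [DecidableRel G.Adj] {M : ℝ}
    (hM0 : 0 ≤ M) (hM : ∀ u v, G.Adj u v → (G.degree u + G.degree v : ℝ) ≤ M) (x : V → ℝ) :
    x ⬝ᵥ (G.lapMatrix ℝ *ᵥ x) ≤ M * (x ⬝ᵥ x) := by
  set f : V → ℝ := fun a => M / G.degree a * x a ^ 2
  have hedge : ∀ a b, (if G.Adj a b then (x a - x b) ^ 2 else 0) ≤
      (if G.Adj a b then f a else 0) + (if G.Adj b a then f b else 0) := by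
    intro a b
    by_cases hab : G.Adj a b
    · simp only [if_pos hab, if_pos hab.symm, f]
      exact sq_sub_le_of_add_le
        (by exact_mod_cast G.degree_pos_iff_exists_adj a |>.mpr ⟨b, hab⟩)
        (by exact_mod_cast G.degree_pos_iff_exists_adj b |>.mpr ⟨a, hab.symm⟩) (hM a b hab)
    · simp [hab, G.adj_comm]
  have hrow : ∀ a, ∑ b, (if G.Adj a b then f a else 0) = G.degree a * f a := fun a => by
    rw [G.degree_eq_sum_if_adj, sum_mul]
    simp only [ite_mul, one_mul, zero_mul]
  have hdeg : ∀ a, G.degree a * f a ≤ M * x a ^ 2 := by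
    intro a
    rcases (G.degree a).eq_zero_or_pos with h | h
    · simp only [h, CharP.cast_eq_zero, zero_mul]
      positivity
    · simp only [f]
      rw [← mul_assoc, mul_div_cancel₀ _ (by positivity)]
  rw [← toLinearMap₂'_apply', SimpleGraph.lapMatrix_toLinearMap₂', div_le_iff₀ two_pos]
  calc ∑ a, ∑ b, (if G.Adj a b then (x a - x b) ^ 2 else 0)
      ≤ ∑ a, ∑ b, ((if G.Adj a b then f a else 0) + (if G.Adj b a then f b else 0)) :=
        sum_le_sum fun a _ => sum_le_sum fun b _ => hedge a b
    _ = 2 * ∑ a, G.degree a * f a := by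
        simp only [sum_add_distrib]
        rw [sum_comm (f := fun a b => if G.Adj b a then f b else 0)]
        simp only [hrow]
        ring
    _ ≤ 2 * ∑ a, M * x a ^ 2 :=
        mul_le_mul_of_nonneg_left (sum_le_sum fun a _ => hdeg a) zero_le_two
    _ = M * (x ⬝ᵥ x) * 2 := by simp only [dotProduct, ← mul_sum, sq]; ring

lemma _root_.Matrix.IsHermitian.eigenvalues_le {n : Type*} [Fintype n] [DecidableEq n]
    {A : Matrix n n ℝ} (hA : A.IsHermitian) {M : ℝ} (h : ∀ x, x ⬝ᵥ (A *ᵥ x) ≤ M * (x ⬝ᵥ x))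
    (i : n) : hA.eigenvalues i ≤ M := by
  set x := hA.eigenvectorBasis i
  have hunit : x.ofLp ⬝ᵥ x.ofLp = 1 := by
    have h := real_inner_self_eq_norm_sq x
    rw [hA.eigenvectorBasis.orthonormal.1 i, EuclideanSpace.inner_eq_star_dotProduct] at h
    simpa using h
  simpa [hA.eigenvalues_eq i, hunit] using h x.ofLp

lemma sum_eigenvalues_lapMatrix_eq_degSum (G : SimpleGraph V) [DecidableRel G.Adj] :
    ∑ i, (lap_isHermitian G).eigenvalues i = degSum G := by
  have htrace : (G.lapMatrix ℝ).trace = degSum G := by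
    simp [SimpleGraph.lapMatrix, SimpleGraph.degMatrix, Matrix.trace_sub, degSum]
  rw [← htrace, (lap_isHermitian G).trace_eq_sum_eigenvalues]
  rfl

lemma mul_rpow_sub_one_le_of_mul_nonneg {c e S B : ℝ} (hce : 0 ≤ c * e) (hS : 0 < S)
    (hSB : S ≤ B) : c * (S ^ e - 1) ≤ c * (B ^ e - 1) := by
  rcases mul_nonneg_iff.mp hce with ⟨hc, he⟩ | ⟨hc, he⟩
  · gcongr
  · exact mul_le_mul_of_nonpos_left
      (sub_le_sub_right (Real.rpow_le_rpow_of_nonpos hS hSB he) 1) hc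

lemma lapDensityEigen_nonneg (G : SimpleGraph V) [DecidableRel G.Adj] (i : V) :
    0 ≤ lapDensityEigen G i :=
  div_nonneg ((SimpleGraph.posSemidef_lapMatrix ℝ G).eigenvalues_nonneg i) (Nat.cast_nonneg _)

lemma lapDensityEigen_le (G : SimpleGraph V) [DecidableRel G.Adj] {M : ℝ} (hM0 : 0 ≤ M)
    (hM : ∀ u v, G.Adj u v → (G.degree u + G.degree v : ℝ) ≤ M) (i : V) :
    lapDensityEigen G i ≤ M / degSum G :=
  div_le_div_of_nonneg_right
    ((lap_isHermitian G).eigenvalues_le (dotProduct_lapMatrix_mulVec_le G hM0 hM) i)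
    (Nat.cast_nonneg _)

lemma sum_lapDensityEigen_rpow_pos_of_adj {G : SimpleGraph V} [DecidableRel G.Adj] {u v : V}
    (huv : G.Adj u v) (q : ℝ) : 0 < ∑ i, lapDensityEigen G i ^ q := by
  have hd : 0 < degSum G := sum_pos' (fun _ _ => Nat.zero_le _)
    ⟨u, mem_univ u, G.degree_pos_iff_exists_adj u |>.mpr ⟨v, huv⟩⟩
  have hsum : ∑ _i : V, (0 : ℝ) < ∑ i, (lap_isHermitian G).eigenvalues i := by
    rw [sum_eigenvalues_lapMatrix_eq_degSum, sum_const_zero]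
    exact_mod_cast hd
  obtain ⟨i, -, hi⟩ := exists_lt_of_sum_lt hsum
  exact sum_pos' (fun j _ => Real.rpow_nonneg (lapDensityEigen_nonneg G j) q)
    ⟨i, mem_univ i, Real.rpow_pos_of_pos (div_pos hi (by exact_mod_cast hd)) q⟩

theorem lapSM_le_of_isGreatest_degAdd_general (G : SimpleGraph V) [DecidableRel G.Adj]
    (M : ℕ) (hM : IsGreatest {x : ℕ | ∃ u v, G.Adj u v ∧ x = G.degree u + G.degree v} M)
    (q r : ℝ) (hq0 : 0 < q) (hq1 : q < 1) :
    lapSM G q r ≤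
      (1 / (1 - r)) *
        (((Fintype.card V : ℝ) * ((M : ℝ) / (degSum G : ℝ)) ^ q) ^ ((1 - r) / (1 - q)) - 1) := by
  obtain ⟨⟨u, v, huv, -⟩, hM_ub⟩ := hM
  have hdens_le : ∀ i, lapDensityEigen G i ≤ M / degSum G :=
    lapDensityEigen_le G (Nat.cast_nonneg M) fun a b hab => by
      exact_mod_cast hM_ub ⟨a, b, hab, rfl⟩
  have hsum_le : ∑ i, lapDensityEigen G i ^ q ≤ Fintype.card V * ((M : ℝ) / degSum G) ^ q :=
    calc ∑ i, lapDensityEigen G i ^ q ≤ ∑ _i : V, ((M : ℝ) / degSum G) ^ q :=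
          sum_le_sum fun i _ =>
            Real.rpow_le_rpow (lapDensityEigen_nonneg G i) (hdens_le i) hq0.le
      _ = Fintype.card V * ((M : ℝ) / degSum G) ^ q := by simp
  have hsign : 0 ≤ 1 / (1 - r) * ((1 - r) / (1 - q)) := by
    rw [show 1 / (1 - r) * ((1 - r) / (1 - q)) = (1 - r) / (1 - r) / (1 - q) by ring]
    refine div_nonneg ?_ (by linarith)
    rcases eq_or_ne (1 - r) 0 with h | h <;> simp [h]
  exact mul_rpow_sub_one_le_of_mul_nonneg hsign
    (sum_lapDensityEigen_rpow_pos_of_adj huv q) hsum_le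

/-- Upper bound on the Sharma–Mittal entropy (Laplacian), for `0 < q < 1`, in terms of
`M = max {deg u + deg v : {u,v} an edge}`:
`H_{q,r}(G) ≤ (1/(1−r))·[(n·(M/d)^q)^{(1−r)/(1−q)} − 1]`. -/
theorem lapSM_le_of_isGreatest_degAdd (G : SimpleGraph V) [DecidableRel G.Adj]
    (M : ℕ) (hM : IsGreatest {x : ℕ | ∃ u v, G.Adj u v ∧ x = G.degree u + G.degree v} M)
    (q r : ℝ) (hq0 : 0 < q) (hq1 : q < 1) (hr : r ≠ 1) :
    lapSM G q r ≤
      (1 / (1 - r)) *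
        (((Fintype.card V : ℝ) * ((M : ℝ) / (degSum G : ℝ)) ^ q) ^ ((1 - r) / (1 - q)) - 1) :=
  lapSM_le_of_isGreatest_degAdd_general G M hM q r hq0 hq1

end SMG
end

section
/- Let G be a k-regular finite simple graph on n vertices with k ≥ 1. For real parameters q with 0 < q < 1 and r ≠ 1, the Sharma–Mittal entropy of G based on the Laplacian satisfies H_{q,r}(G) ≤ (1/(1−r))·[2^{q(1−r)/(1−q)}·n^{1−r} − 1]. -/
open Finset

namespace SMG

variable {V : Type*} [Fintype V] [DecidableEq V]

/-!
The Laplacian eigenvalues are nonnegative and, by Gershgorin's theorem, at most `2k` for a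
`k`-regular graph; as `d = nk`, each `γᵢ ≤ 2/n`, so `∑ γᵢ^q ≤ n (2/n)^q = 2^q n^(1-q)`.
For `q < 1` the map `x ↦ (x^((1-r)/(1-q)) - 1)/(1-r)` is increasing on `(0, ∞)` whatever
the sign of `1 - r`, and `∑ γᵢ^q > 0` because `L ≠ 0`.
-/

section Laplacian

variable (G : SimpleGraph V) [DecidableRel G.Adj]

lemma lapMatrix_apply_self (v : V) : G.lapMatrix ℝ v v = G.degree v := by
  simp [SimpleGraph.lapMatrix, SimpleGraph.degMatrix]

lemma sum_norm_lapMatrix_offDiag (v : V) :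
    ∑ j ∈ univ.erase v, ‖G.lapMatrix ℝ v j‖ = G.degree v := by
  have hoff : ∀ j ∈ univ.erase v, ‖G.lapMatrix ℝ v j‖ = if G.Adj v j then 1 else 0 := by
    intro j hj
    have hjv : v ≠ j := (ne_of_mem_erase hj).symm
    by_cases hadj : G.Adj v j <;>
      simp [SimpleGraph.lapMatrix, SimpleGraph.degMatrix, hjv, hadj]
  rw [sum_congr rfl hoff, sum_erase _ (by simp), ← SimpleGraph.degree_eq_sum_if_adj]

lemma lapMatrix_eigenvalues_le (i : V) :
    (lap_isHermitian G).eigenvalues i ≤ 2 * G.maxDegree := by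
  have hμ : Module.End.HasEigenvalue (Matrix.toLin' (G.lapMatrix ℝ))
      ((lap_isHermitian G).eigenvalues i) := by
    rw [Module.End.hasEigenvalue_iff_mem_spectrum, Matrix.spectrum_toLin']
    exact (lap_isHermitian G).eigenvalues_mem_spectrum_real i
  obtain ⟨v, hv⟩ := eigenvalue_mem_ball hμ
  rw [Metric.mem_closedBall, Real.dist_eq, lapMatrix_apply_self,
    sum_norm_lapMatrix_offDiag] at hv
  have hdeg : (G.degree v : ℝ) ≤ G.maxDegree := by exact_mod_cast G.degree_le_maxDegree v
  linarith [(abs_le.mp hv).2]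

lemma exists_lapMatrix_eigenvalues_pos {v : V} (hv : 0 < G.degree v) :
    ∃ i, 0 < (lap_isHermitian G).eigenvalues i := by
  have hL : G.lapMatrix ℝ ≠ 0 := fun h => by
    have := lapMatrix_apply_self G v
    rw [h, Matrix.zero_apply] at this
    exact hv.ne' (by exact_mod_cast this.symm)
  obtain ⟨i, hi⟩ := Function.ne_iff.mp (mt (lap_isHermitian G).eigenvalues_eq_zero_iff.mp hL)
  exact ⟨i, ((SimpleGraph.posSemidef_lapMatrix ℝ G).eigenvalues_nonneg i).lt_of_ne' hi⟩

omit [DecidableEq V] in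
lemma degSum_eq_of_isRegularOfDegree {k : ℕ} (hreg : G.IsRegularOfDegree k) :
    degSum G = Fintype.card V * k := by
  simp [degSum, hreg.degree_eq, card_univ]

lemma lapDensityEigen_nonneg_s10 (v : V) : 0 ≤ lapDensityEigen G v :=
  div_nonneg ((SimpleGraph.posSemidef_lapMatrix ℝ G).eigenvalues_nonneg v) (Nat.cast_nonneg _)

lemma lapDensityEigen_le_of_isRegularOfDegree {k : ℕ} (hk : 1 ≤ k)
    (hreg : G.IsRegularOfDegree k) (v : V) :
    lapDensityEigen G v ≤ 2 / Fintype.card V := by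
  have : Nonempty V := ⟨v⟩
  have hd : (degSum G : ℝ) = Fintype.card V * k := by
    exact_mod_cast degSum_eq_of_isRegularOfDegree G hreg
  have hkpos : (0 : ℝ) < k := by exact_mod_cast hk
  calc lapDensityEigen G v ≤ 2 * k / degSum G := by
        unfold lapDensityEigen
        gcongr
        exact_mod_cast hreg.maxDegree_eq ▸ lapMatrix_eigenvalues_le G v
    _ = 2 / Fintype.card V := by
        rw [hd]
        field_simp

lemma sum_lapDensityEigen_rpow_pos {v : V} (hv : 0 < G.degree v) (q : ℝ) :
    0 < ∑ w, lapDensityEigen G w ^ q := by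
  obtain ⟨i, hi⟩ := exists_lapMatrix_eigenvalues_pos G hv
  have hd : 0 < (degSum G : ℝ) := by
    have hvd : G.degree v ≤ degSum G :=
      single_le_sum (f := (G.degree ·)) (fun w _ => Nat.zero_le _) (mem_univ v)
    exact_mod_cast hv.trans_le hvd
  exact sum_pos' (fun w _ => Real.rpow_nonneg (lapDensityEigen_nonneg_s10 G w) q)
    ⟨i, mem_univ i, Real.rpow_pos_of_pos (div_pos hi hd) q⟩

lemma sum_lapDensityEigen_rpow_le_of_isRegularOfDegree {k : ℕ} (hk : 1 ≤ k)
    (hreg : G.IsRegularOfDegree k) {q : ℝ} (hq : 0 ≤ q) :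
    ∑ w, lapDensityEigen G w ^ q ≤ Fintype.card V * (2 / Fintype.card V : ℝ) ^ q := by
  refine (sum_le_sum fun w _ => Real.rpow_le_rpow (lapDensityEigen_nonneg_s10 G w)
    (lapDensityEigen_le_of_isRegularOfDegree G hk hreg w) hq).trans_eq ?_
  simp

end Laplacian

lemma one_div_mul_rpow_div_sub_one_le_of_le {a c x y : ℝ} (hc : 0 < c) (hx : 0 < x)
    (hxy : x ≤ y) :
    1 / a * (x ^ (a / c) - 1) ≤ 1 / a * (y ^ (a / c) - 1) := by
  rcases lt_or_ge a 0 with ha | ha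
  · have := Real.rpow_le_rpow_of_nonpos hx hxy (div_nonpos_of_nonpos_of_nonneg ha.le hc.le)
    exact mul_le_mul_of_nonpos_left (by linarith) (by rw [one_div]; exact inv_nonpos.mpr ha.le)
  · have := Real.rpow_le_rpow hx.le hxy (div_nonneg ha hc.le)
    exact mul_le_mul_of_nonneg_left (by linarith) (by positivity)

lemma mul_div_rpow_rpow_div_one_sub {n a q s : ℝ} (hn : 0 < n) (ha : 0 ≤ a) (hq : q ≠ 1) :
    (n * (a / n) ^ q) ^ (s / (1 - q)) = a ^ (q * s / (1 - q)) * n ^ s := by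
  have hq' : 1 - q ≠ 0 := sub_ne_zero.mpr hq.symm
  have hbase : n * (a / n) ^ q = a ^ q * n ^ (1 - q) := by
    rw [Real.div_rpow ha hn.le, Real.rpow_sub hn, Real.rpow_one]
    field_simp
  rw [hbase, Real.mul_rpow (by positivity) (by positivity), ← Real.rpow_mul ha,
    ← Real.rpow_mul hn.le, mul_div_assoc, mul_div_cancel₀ s hq']

/-- For a `k`-regular graph (`k ≥ 1`) and `0 < q < 1`:
`H_{q,r}(G) ≤ (1/(1−r))·[2^{q(1−r)/(1−q)}·n^{1−r} − 1]`. -/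
theorem lapSM_le_of_regular (G : SimpleGraph V) [DecidableRel G.Adj]
    (k : ℕ) (hk : 1 ≤ k) (hreg : G.IsRegularOfDegree k)
    (q r : ℝ) (hq0 : 0 < q) (hq1 : q < 1) (hr : r ≠ 1) :
    lapSM G q r ≤
      (1 / (1 - r)) *
        ((2 : ℝ) ^ (q * (1 - r) / (1 - q)) * (Fintype.card V : ℝ) ^ (1 - r) - 1) := by
  rcases isEmpty_or_nonempty V with hV | ⟨⟨v⟩⟩
  · have hr' : 1 - r ≠ 0 := sub_ne_zero.mpr hr.symm
    simp [lapSM, Real.zero_rpow (div_ne_zero hr' (sub_ne_zero.mpr hq1.ne')), Real.zero_rpow hr']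
  have hn : 0 < (Fintype.card V : ℝ) := Nat.cast_pos.mpr (Fintype.card_pos_iff.mpr ⟨v⟩)
  rw [lapSM, ← mul_div_rpow_rpow_div_one_sub hn zero_le_two hq1.ne]
  exact one_div_mul_rpow_div_sub_one_le_of_le (sub_pos.mpr hq1)
    (sum_lapDensityEigen_rpow_pos G (hreg.degree_eq v ▸ hk) q)
    (sum_lapDensityEigen_rpow_le_of_isRegularOfDegree G hk hreg hq0.le)

end SMG
end

section
/- Let G be a finite simple graph on n vertices with m ≥ 1 edges. For real parameters q with 0 < q < 1 and r ≠ 1, the Sharma–Mittal entropy of G based on the signless Laplacian satisfies H_{q,r}(G) ≤ (1/(1−r))·[(n·(√(4m + 2(n−1)(n−2))/(2m))^q)^{(1−r)/(1−q)} − 1]. -/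
/-!
The density eigenvalues `γᵢ` form a probability vector: they are nonnegative because `Q(G)` is
a Gram matrix `B Bᵀ` of the incidence matrix `B`, and they sum to `tr Q(G) / d = 1`. Concavity of
`x ↦ x ^ q` for `0 < q < 1` (Jensen with uniform weights) gives `∑ γᵢ ^ q ≤ n · (1/n) ^ q`, and
`1/n ≤ √(4m + 2(n-1)(n-2)) / (2m)` because `m ≤ n²`. The Sharma–Mittal expression is monotone in
`∑ γᵢ ^ q` whatever the sign of `1 - r`, so the bound follows. Jensen's bound `n ^ (1 - q)` is
already sharper than the one through the largest signless Laplacian eigenvalue, so no estimate of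
that eigenvalue is needed.
-/

open Finset

namespace SMG

variable {V : Type*} [Fintype V] [DecidableEq V]

/-- The signless Laplacian matrix `Q(G) = D(G) + A(G)` of a simple graph. -/
def signlessLapMatrix (G : SimpleGraph V) [DecidableRel G.Adj] : Matrix V V ℝ :=
  G.degMatrix ℝ + G.adjMatrix ℝ

/-- The signless Laplacian matrix of a simple graph is Hermitian. -/
lemma signlessLap_isHermitian (G : SimpleGraph V) [DecidableRel G.Adj] :
    (signlessLapMatrix G).IsHermitian := by
  refine Matrix.IsHermitian.add ?_ ?_
  · exact Matrix.isHermitian_diagonal _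
  · rw [Matrix.IsHermitian, Matrix.conjTranspose_eq_transpose_of_trivial]
    exact G.isSymm_adjMatrix

/-- The eigenvalues (with multiplicity) of the density matrix `ρ_Q(G) = Q(G)/d`,
namely `γ v = μ v / d`. -/
noncomputable def signlessLapDensityEigen (G : SimpleGraph V) [DecidableRel G.Adj] : V → ℝ :=
  fun v => (signlessLap_isHermitian G).eigenvalues v / (degSum G : ℝ)

/-- Sharma–Mittal entropy of a graph based on its signless Laplacian:
`H_{q,r}(G) = (1/(1-r)) * ((Σ γᵢ^q)^((1-r)/(1-q)) - 1)` with real powers. -/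
noncomputable def signlessLapSM (G : SimpleGraph V) [DecidableRel G.Adj] (q r : ℝ) : ℝ :=
  (1 / (1 - r)) *
    ((∑ v, signlessLapDensityEigen G v ^ q) ^ ((1 - r) / (1 - q)) - 1)

section ProbabilityVector

variable {ι : Type*} [Fintype ι] {p : ι → ℝ} {q : ℝ}

theorem sum_rpow_le_card_mul_inv_rpow (hp : ∀ i, 0 ≤ p i) (hsum : ∑ i, p i = 1)
    (hq0 : 0 ≤ q) (hq1 : q ≤ 1) :
    ∑ i, p i ^ q ≤ Fintype.card ι * ((Fintype.card ι : ℝ)⁻¹) ^ q := by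
  have hne : (univ : Finset ι).Nonempty := nonempty_of_sum_ne_zero (f := p) (by simp [hsum])
  have hn : (0 : ℝ) < Fintype.card ι := by
    exact_mod_cast Fintype.card_pos_iff.mpr (univ_nonempty_iff.mp hne)
  have hweights : ∑ _i : ι, (Fintype.card ι : ℝ)⁻¹ = 1 := by
    simp [hn.ne']
  have hjensen := (Real.concaveOn_rpow hq0 hq1).le_map_sum (t := univ)
    (fun _ _ => inv_nonneg.mpr hn.le) hweights (fun i _ => Set.mem_Ici.mpr (hp i))
  simp only [smul_eq_mul, ← mul_sum, hsum, mul_one] at hjensen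
  calc ∑ i, p i ^ q = Fintype.card ι * ((Fintype.card ι : ℝ)⁻¹ * ∑ i, p i ^ q) := by
        field_simp
    _ ≤ Fintype.card ι * ((Fintype.card ι : ℝ)⁻¹) ^ q := by gcongr

theorem sum_rpow_pos (hp : ∀ i, 0 ≤ p i) (hsum : ∑ i, p i = 1) : 0 < ∑ i, p i ^ q := by
  obtain ⟨i, -, hi⟩ := exists_ne_zero_of_sum_ne_zero (s := univ) (f := p) (by simp [hsum])
  exact sum_pos' (fun j _ => Real.rpow_nonneg (hp j) q)
    ⟨i, mem_univ i, Real.rpow_pos_of_pos ((hp i).lt_of_ne' hi) q⟩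

end ProbabilityVector

theorem one_div_mul_rpow_sub_one_le {q r x y : ℝ} (hq : q < 1) (hx : 0 < x) (hxy : x ≤ y) :
    1 / (1 - r) * (x ^ ((1 - r) / (1 - q)) - 1) ≤ 1 / (1 - r) * (y ^ ((1 - r) / (1 - q)) - 1) := by
  rcases le_or_gt r 1 with hr | hr
  · have hpow := Real.rpow_le_rpow hx.le hxy (div_nonneg (sub_nonneg.mpr hr) (sub_pos.mpr hq).le)
    gcongr
  · have hpow := Real.rpow_le_rpow_of_nonpos hx hxy
      (div_nonpos_of_nonpos_of_nonneg (sub_nonpos.mpr hr.le) (sub_pos.mpr hq).le)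
    exact mul_le_mul_of_nonpos_left (by linarith) (one_div_nonpos.mpr (sub_nonpos.mpr hr.le))

theorem inv_le_sqrt_div {m n c : ℝ} (hm : 0 < m) (hmn : m ≤ n ^ 2) (hc : 0 ≤ c) :
    n⁻¹ ≤ Real.sqrt (4 * m + c) / (2 * m) := by
  rcases le_or_gt n 0 with hn | hn
  · exact (inv_nonpos.mpr hn).trans (by positivity)
  rw [le_div_iff₀ (by positivity), inv_mul_le_iff₀ hn]
  calc 2 * m ≤ Real.sqrt (n ^ 2 * (4 * m + c)) :=
        (Real.le_sqrt (by positivity) (by positivity)).mpr (by nlinarith)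
    _ = n * Real.sqrt (4 * m + c) := by rw [Real.sqrt_mul (sq_nonneg n), Real.sqrt_sq hn.le]

theorem Nat.cast_sub_one_mul_cast_sub_two_nonneg (n : ℕ) : 0 ≤ ((n : ℝ) - 1) * ((n : ℝ) - 2) := by
  rcases le_or_gt n 1 with hn | hn
  · have : (n : ℝ) ≤ 1 := by exact_mod_cast hn
    nlinarith
  · have : (2 : ℝ) ≤ n := by exact_mod_cast hn
    nlinarith

open Matrix in
theorem signlessLapMatrix_eq_incMatrix_mul_transpose (G : SimpleGraph V) [DecidableRel G.Adj] :
    signlessLapMatrix G = G.incMatrix ℝ * (G.incMatrix ℝ)ᵀ := by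
  rw [G.incMatrix_mul_transpose]
  ext a b
  simp only [signlessLapMatrix, SimpleGraph.degMatrix, Matrix.add_apply,
    Matrix.diagonal_apply, SimpleGraph.adjMatrix_apply, Matrix.of_apply]
  split_ifs with h h' <;> simp_all

theorem signlessLapMatrix_posSemidef (G : SimpleGraph V) [DecidableRel G.Adj] :
    (signlessLapMatrix G).PosSemidef := by
  rw [signlessLapMatrix_eq_incMatrix_mul_transpose, ← Matrix.conjTranspose_eq_transpose_of_trivial]
  exact Matrix.posSemidef_self_mul_conjTranspose _

theorem trace_signlessLapMatrix (G : SimpleGraph V) [DecidableRel G.Adj] :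
    (signlessLapMatrix G).trace = degSum G := by
  simp [signlessLapMatrix, Matrix.trace_add, SimpleGraph.degMatrix, degSum]

theorem signlessLapDensityEigen_nonneg (G : SimpleGraph V) [DecidableRel G.Adj] (v : V) :
    0 ≤ signlessLapDensityEigen G v :=
  div_nonneg ((signlessLapMatrix_posSemidef G).eigenvalues_nonneg v) (Nat.cast_nonneg _)

theorem sum_signlessLapDensityEigen (G : SimpleGraph V) [DecidableRel G.Adj]
    (hG : degSum G ≠ 0) : ∑ v, signlessLapDensityEigen G v = 1 := by
  have htrace := (signlessLap_isHermitian G).trace_eq_sum_eigenvalues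
  rw [trace_signlessLapMatrix] at htrace
  simp only [signlessLapDensityEigen, ← sum_div, RCLike.ofReal_real_eq_id, id] at htrace ⊢
  rw [← htrace, div_self (Nat.cast_ne_zero.mpr hG)]

theorem signlessLapSM_le_general (G : SimpleGraph V) [DecidableRel G.Adj]
    (m : ℕ) (hm : m = G.edgeFinset.card) (hm1 : 1 ≤ m)
    (q r : ℝ) (hq0 : 0 < q) (hq1 : q < 1) :
    signlessLapSM G q r ≤
      (1 / (1 - r)) *
        (((Fintype.card V : ℝ) *
            (Real.sqrt (4 * m + 2 * ((Fintype.card V : ℝ) - 1) * ((Fintype.card V : ℝ) - 2)) /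
              (2 * m)) ^ q) ^ ((1 - r) / (1 - q)) - 1) := by
  set n := Fintype.card V
  have hdegSum : degSum G = 2 * m := by
    rw [degSum, G.sum_degrees_eq_twice_card_edges, hm]
  have hsum := sum_signlessLapDensityEigen G (by omega)
  have hnonneg := signlessLapDensityEigen_nonneg G
  have hmn : (m : ℝ) ≤ (n : ℝ) ^ 2 := by
    exact_mod_cast hm ▸ G.card_edgeFinset_le_card_choose_two.trans (Nat.choose_le_pow n 2)
  have hinv : (n : ℝ)⁻¹ ≤ Real.sqrt (4 * m + 2 * ((n : ℝ) - 1) * ((n : ℝ) - 2)) / (2 * m) := by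
    refine inv_le_sqrt_div (by exact_mod_cast hm1) hmn ?_
    rw [mul_assoc]
    exact mul_nonneg zero_le_two (Nat.cast_sub_one_mul_cast_sub_two_nonneg n)
  refine one_div_mul_rpow_sub_one_le hq1 (sum_rpow_pos hnonneg hsum) ?_
  calc ∑ v, signlessLapDensityEigen G v ^ q ≤ n * ((n : ℝ)⁻¹) ^ q :=
        sum_rpow_le_card_mul_inv_rpow hnonneg hsum hq0.le hq1.le
    _ ≤ _ := by gcongr

/-- Upper bound on the Sharma–Mittal entropy (signless Laplacian), for `0 < q < 1`:
`H_{q,r}(G) ≤ (1/(1−r))·[(n·(√(4m + 2(n−1)(n−2))/(2m))^q)^{(1−r)/(1−q)} − 1]`. -/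
theorem signlessLapSM_le (G : SimpleGraph V) [DecidableRel G.Adj]
    (m : ℕ) (hm : m = G.edgeFinset.card) (hm1 : 1 ≤ m)
    (q r : ℝ) (hq0 : 0 < q) (hq1 : q < 1) (hr : r ≠ 1) :
    signlessLapSM G q r ≤
      (1 / (1 - r)) *
        (((Fintype.card V : ℝ) *
            (Real.sqrt (4 * m + 2 * ((Fintype.card V : ℝ) - 1) * ((Fintype.card V : ℝ) - 2)) /
              (2 * m)) ^ q) ^ ((1 - r) / (1 - q)) - 1) :=
  signlessLapSM_le_general G m hm hm1 q r hq0 hq1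

end SMG
end

section
/- Let G₁ be a connected finite simple graph on n₁ ≥ 2 vertices u₁,…,u_{n₁} with Laplacian eigenvalues λ⁽¹⁾₁,…,λ⁽¹⁾_{n₁}, and let G₂ be any finite simple graph on n₂ vertices with Laplacian eigenvalues λ⁽²⁾₁ ≤ λ⁽²⁾₂ ≤ … ≤ λ⁽²⁾_{n₂} listed in nondecreasing order (so λ⁽²⁾₁ = 0). Let G = G₁ • G₂ be their lexicographic product and let d be the degree sum of G. For real parameters q > 0, q ≠ 1 and r ≠ 1, the Sharma–Mittal entropy of G based on the Laplacian satisfies H_{q,r}(G) = (1/(1−r))·[(1/d)^{q(1−r)/(1−q)}·(Σ_{i=1}^{n₁} (n₂·λ⁽¹⁾ᵢ)^q + Σ_{j=2}^{n₂} Σ_{i=1}^{n₁} (λ⁽²⁾ⱼ + n₂·deg_{G₁}(uᵢ))^q)^{(1−r)/(1−q)} − 1]. -/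
/-
Write `L(G₁ • G₂) = n₂ D₁ ⊗ I + I ⊗ L₂ - A₁ ⊗ J`. Conjugating the second factor by the shear
`Q = I + (1 - e₀) e₀ᵀ`, which sends `e₀` to the all-ones vector, makes both `L₂` and `J` block
triangular with respect to `span {1}`: the `0`-th column of `Q⁻¹ L₂ Q` vanishes because `L₂ 1 = 0`,
and `Q⁻¹ J Q` lives in row `0`. After reordering coordinates, the conjugated Laplacian of the
product is block upper triangular with diagonal blocks `n₂ L₁` and, for every vertex `u` of `G₁`,
`n₂ deg u + L̄₂`, where `L̄₂` is the map induced by `L₂` on `ℝ^{V₂} ⧸ span {1}`; its eigenvalues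
are those of `L₂` with one copy of `0` removed. Comparing the roots of the characteristic
polynomials gives the power sum `∑ λ^q` over the spectrum of the product, and the normalisation
`1/d` of the density matrix factors out of it.
-/

open Finset

namespace SMG

variable {V : Type*} [Fintype V] [DecidableEq V]

/-- The lexicographic product of two simple graphs: `(u,v) ~ (u',v')` iff `u ~ u'` in `G₁`,
or `u = u'` and `v ~ v'` in `G₂`. -/
def lexProd {V₁ V₂ : Type*} (G₁ : SimpleGraph V₁) (G₂ : SimpleGraph V₂) :
    SimpleGraph (V₁ × V₂) where
  Adj x y := G₁.Adj x.1 y.1 ∨ (x.1 = y.1 ∧ G₂.Adj x.2 y.2)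
  symm := by
    constructor
    rintro x y (h | ⟨h1, h2⟩)
    · exact Or.inl h.symm
    · exact Or.inr ⟨h1.symm, h2.symm⟩
  loopless := by
    constructor
    rintro x (h | ⟨_, h2⟩)
    · exact G₁.irrefl h
    · exact G₂.irrefl h2

instance {V₁ V₂ : Type*} (G₁ : SimpleGraph V₁) (G₂ : SimpleGraph V₂)
    [DecidableRel G₁.Adj] [DecidableRel G₂.Adj] [DecidableEq V₁] :
    DecidableRel (lexProd G₁ G₂).Adj := fun _ _ =>
  inferInstanceAs (Decidable (_ ∨ _))

open Matrix Polynomial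
open scoped Kronecker

lemma charpoly_mul_mul_of_mul_eq_one {R ι : Type*} [CommRing R] [Fintype ι] [DecidableEq ι]
    {P Q : Matrix ι ι R} (hPQ : P * Q = 1) (M : Matrix ι ι R) :
    (Q * M * P).charpoly = M.charpoly := by
  rw [Matrix.mul_assoc, charpoly_mul_comm, Matrix.mul_assoc, hPQ, Matrix.mul_one]

section Shear

variable {R : Type*} [CommRing R] {ι : Type*} [Fintype ι] [DecidableEq ι]

def shear (o : ι) : Matrix ι ι R := 1 + vecMulVec (1 - Pi.single o 1) (Pi.single o 1)

def shearInv (o : ι) : Matrix ι ι R := 1 - vecMulVec (1 - Pi.single o 1) (Pi.single o 1)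

lemma vecMulVec_one_sub_single_mul_self (o : ι) :
    vecMulVec (1 - Pi.single o 1) (Pi.single o (1 : R)) *
      vecMulVec (1 - Pi.single o 1) (Pi.single o 1) = 0 := by
  simp [vecMulVec_mul_vecMulVec]

lemma shear_mul_shearInv (o : ι) : shear o * shearInv o = (1 : Matrix ι ι R) := by
  rw [shear, shearInv, add_mul, mul_sub, mul_sub, vecMulVec_one_sub_single_mul_self]
  simp

lemma shearInv_mul_shear (o : ι) : shearInv o * shear o = (1 : Matrix ι ι R) := by
  rw [shear, shearInv, sub_mul, mul_add, mul_add, vecMulVec_one_sub_single_mul_self]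
  simp

lemma shear_mulVec_single (o : ι) : shear o *ᵥ Pi.single o 1 = (1 : ι → R) := by
  ext j
  by_cases hj : j = o <;> simp [shear, vecMulVec_apply, hj]

lemma shearInv_mulVec_one (o : ι) : shearInv o *ᵥ 1 = (Pi.single o 1 : ι → R) := by
  simp [shearInv, sub_mulVec, vecMulVec_mulVec]

lemma shearInv_mul_mul_shear_apply_self_right {M : Matrix ι ι R} (hM : M *ᵥ 1 = 0) (o j : ι) :
    (shearInv o * M * shear o : Matrix ι ι R) j o = 0 := by
  have : (shearInv o * M * shear o) *ᵥ Pi.single o 1 = 0 := by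
    rw [← mulVec_mulVec, shear_mulVec_single, ← mulVec_mulVec, hM, mulVec_zero]
  simpa using congrFun this j

lemma shearInv_mul_ones_mul_shear (o : ι) :
    shearInv o * vecMulVec 1 1 * shear o = vecMulVec (Pi.single o 1) ((1 : ι → R) ᵥ* shear o) := by
  rw [mul_vecMulVec, vecMulVec_mul, shearInv_mulVec_one]

lemma shearInv_mul_ones_mul_shear_apply_of_ne (o j : ι) (hj : j ≠ o) (k : ι) :
    (shearInv o * vecMulVec 1 1 * shear o : Matrix ι ι R) j k = 0 := by
  rw [shearInv_mul_ones_mul_shear, vecMulVec_apply, Pi.single_eq_of_ne hj, zero_mul]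

lemma shearInv_mul_ones_mul_shear_apply_self (o : ι) :
    (shearInv o * vecMulVec 1 1 * shear o : Matrix ι ι R) o o = Fintype.card ι := by
  rw [shearInv_mul_ones_mul_shear, vecMulVec_apply, Pi.single_eq_same, one_mul,
    ← dotProduct_single_one ((1 : ι → R) ᵥ* shear o) o, ← dotProduct_mulVec, shear_mulVec_single,
    one_dotProduct_one]

/-- When `M *ᵥ 1 = 0`, this is the matrix of the map induced by `M` on `(ι → R) ⧸ span {1}`,
in the basis of the images of `Pi.single j 1`, `j ≠ o`. -/
def quotOnes (M : Matrix ι ι R) (o : ι) : Matrix {j // j ≠ o} {j // j ≠ o} R :=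
  (shearInv o * M * shear o).submatrix (↑) (↑)

end Shear

section BlockTriangular

variable {R : Type*} [CommRing R]

lemma charpoly_blockDiagonal {m o : Type*} [Fintype m] [DecidableEq m] [Fintype o] [DecidableEq o]
    (M : o → Matrix m m R) : (blockDiagonal M).charpoly = ∏ k, (M k).charpoly := by
  have : charmatrix (blockDiagonal M) = blockDiagonal fun k => charmatrix (M k) := by
    ext ⟨i, k⟩ ⟨j, k'⟩
    by_cases hk : k = k' <;> by_cases hij : i = j <;> simp [blockDiagonal_apply, hk, hij]
  rw [charpoly, this, det_blockDiagonal]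
  rfl

lemma charpoly_eq_X_mul_charpoly_submatrix {ι : Type*} [Fintype ι] [DecidableEq ι]
    {N : Matrix ι ι R} {o : ι} (hN : ∀ j, N j o = 0) :
    N.charpoly = X * (N.submatrix ((↑) : {j // j ≠ o} → ι) (↑)).charpoly := by
  let e : ι ≃ {j // j ≠ o} ⊕ Unit :=
    (Equiv.optionSubtypeNe o).symm.trans (Equiv.optionEquivSumPUnit _)
  rw [← charpoly_reindex e, ← fromBlocks_toBlocks (reindex e e N)]
  have h12 : (reindex e e N).toBlocks₁₂ = 0 := by ext; simp [toBlocks₁₂, e, hN]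
  have h22 : (reindex e e N).toBlocks₂₂ = 0 := by ext; simp [toBlocks₂₂, e, hN]
  rw [h12, h22, charpoly_fromBlocks_zero₁₂, charpoly_zero, mul_comm, Fintype.card_unit, pow_one]
  rfl

lemma charpoly_eq_X_mul_charpoly_quotOnes {ι : Type*} [Fintype ι] [DecidableEq ι]
    {M : Matrix ι ι R} (hM : M *ᵥ 1 = 0) (o : ι) : M.charpoly = X * (quotOnes M o).charpoly := by
  rw [← charpoly_mul_mul_of_mul_eq_one (shear_mul_shearInv o) M,
    charpoly_eq_X_mul_charpoly_submatrix (shearInv_mul_mul_shear_apply_self_right hM o)]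
  rfl

lemma charpoly_quotOnes_eq_prod [IsDomain R] {ι : Type*} [Fintype ι] [DecidableEq ι]
    {M : Matrix ι ι R} (hM : M *ᵥ 1 = 0) {f : ι → R} (hf : M.charpoly = ∏ j, (X - C (f j)))
    {o : ι} (ho : f o = 0) : (quotOnes M o).charpoly = ∏ j : {j // j ≠ o}, (X - C (f j)) := by
  refine mul_left_cancel₀ (X_ne_zero (R := R)) ?_
  rw [← charpoly_eq_X_mul_charpoly_quotOnes hM, hf, Fintype.prod_eq_mul_prod_subtype_ne _ o, ho,
    C_0, sub_zero]

variable {V₁ V₂ : Type*} [Fintype V₁] [DecidableEq V₁] [Fintype V₂] [DecidableEq V₂]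

def prodSplitEquiv (o : V₂) : V₁ × V₂ ≃ V₁ ⊕ ({j // j ≠ o} × V₁) where
  toFun x := if h : x.2 = o then .inl x.1 else .inr (⟨x.2, h⟩, x.1)
  invFun := Sum.elim (fun u => (u, o)) (fun p => (p.2, p.1))
  left_inv := by rintro ⟨u, j⟩; by_cases h : j = o <;> simp [h]
  right_inv := by
    rintro (u | ⟨⟨j, h⟩, u⟩)
    · simp
    · simp [h]

lemma charpoly_kroneckerSum_sub_kronecker {d : V₁ → R} {A : Matrix V₁ V₁ R}
    {N K : Matrix V₂ V₂ R} {o : V₂} (hN : ∀ j, N j o = 0) (hK : ∀ j ≠ o, ∀ k, K j k = 0) :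
    (diagonal d ⊗ₖ 1 + 1 ⊗ₖ N - A ⊗ₖ K).charpoly =
      (diagonal d - K o o • A).charpoly *
        ∏ u, (d u • 1 + N.submatrix ((↑) : {j // j ≠ o} → V₂) (↑)).charpoly := by
  let e := prodSplitEquiv (V₁ := V₁) o
  let M := reindex e e (diagonal d ⊗ₖ 1 + 1 ⊗ₖ N - A ⊗ₖ K)
  have h11 : M.toBlocks₁₁ = diagonal d - K o o • A := by
    ext u u'
    by_cases hu : u = u' <;>
      simp [M, e, toBlocks₁₁, prodSplitEquiv, diagonal_apply, one_apply, hu, hN, mul_comm]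
  have h21 : M.toBlocks₂₁ = 0 := by
    ext ⟨⟨j, hj⟩, u⟩ u'
    simp [M, e, toBlocks₂₁, prodSplitEquiv, hN, hK j hj, hj]
  have h22 : M.toBlocks₂₂ = blockDiagonal fun u => d u • 1 + N.submatrix (↑) (↑) := by
    ext ⟨⟨j, hj⟩, u⟩ ⟨⟨k, hk⟩, u'⟩
    by_cases hu : u = u' <;>
      simp [M, e, toBlocks₂₂, prodSplitEquiv, blockDiagonal_apply, diagonal_apply, one_apply,
        hK j hj, hu]
  rw [← charpoly_reindex e]
  change M.charpoly = _
  rw [← fromBlocks_toBlocks M, h11, h21, h22, charpoly_fromBlocks_zero₂₁, charpoly_blockDiagonal]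

end BlockTriangular

section Roots

variable {K : Type*} [CommRing K] [IsDomain K]

lemma isRoot_prod_X_sub_C_iff {α : Type*} [Fintype α] {f : α → K} {x : K} :
    (∏ a, (X - C (f a))).IsRoot x ↔ ∃ a, f a = x := by
  simp only [isRoot_prod, Finset.mem_univ, true_and, root_X_sub_C]

lemma roots_prod_X_sub_C_univ {α : Type*} [Fintype α] (f : α → K) :
    (∏ a, (X - C (f a))).roots = Finset.univ.val.map f := by
  have := roots_multiset_prod_X_sub_C (Finset.univ.val.map f)
  rwa [Multiset.map_map] at this

lemma sum_comp_eq_of_prod_X_sub_C_eq {α β M : Type*} [Fintype α] [Fintype β] [AddCommMonoid M]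
    {f : α → K} {g : β → K} (h : ∏ a, (X - C (f a)) = ∏ b, (X - C (g b))) (F : K → M) :
    ∑ a, F (f a) = ∑ b, F (g b) := by
  have hfg := congrArg roots h
  rw [roots_prod_X_sub_C_univ, roots_prod_X_sub_C_univ] at hfg
  have := congrArg (fun s => (s.map F).sum) hfg
  simp only [Multiset.map_map] at this
  exact this

end Roots

section Spectrum

variable {K : Type*} [Field K] [Infinite K] {ι : Type*} [Fintype ι] [DecidableEq ι]
  {M : Matrix ι ι K} {f : ι → K}

lemma charpoly_smul_eq_prod (hM : M.charpoly = ∏ i, (X - C (f i))) {c : K} (hc : c ≠ 0) :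
    (c • M).charpoly = ∏ i, (X - C (c * f i)) := by
  refine Polynomial.funext fun t => ?_
  have : scalar ι t - c • M = c • (scalar ι (t / c) - M) := by
    ext i j; by_cases hij : i = j <;> simp [hij, mul_sub, mul_div_cancel₀ _ hc]
  rw [eval_charpoly, this, det_smul, ← eval_charpoly, hM]
  simp only [eval_prod, eval_sub, eval_X, eval_C]
  rw [← Finset.card_univ, Finset.pow_card_mul_prod]
  exact Finset.prod_congr rfl fun i _ => by rw [mul_sub, mul_div_cancel₀ _ hc]

lemma charpoly_smul_one_add_eq_prod (hM : M.charpoly = ∏ i, (X - C (f i))) (c : K) :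
    (c • 1 + M).charpoly = ∏ i, (X - C (f i + c)) := by
  refine Polynomial.funext fun t => ?_
  have : scalar ι t - (c • 1 + M) = scalar ι (t - c) - M := by
    ext i j; by_cases hij : i = j <;> simp [hij]; ring
  rw [eval_charpoly, this, ← eval_charpoly, hM]
  simp [eval_prod, sub_sub, add_comm]

end Spectrum

section Laplacian

variable (G : SimpleGraph V) [DecidableRel G.Adj]

lemma charpoly_lapMatrix_eq_prod :
    (G.lapMatrix ℝ).charpoly = ∏ v, (X - C ((lap_isHermitian G).eigenvalues v)) := by
  simpa using (lap_isHermitian G).charpoly_eq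

lemma isRoot_charpoly_lapMatrix_zero [Nonempty V] : (G.lapMatrix ℝ).charpoly.IsRoot 0 := by
  rw [IsRoot, eval_charpoly, map_zero, zero_sub, det_neg, G.det_lapMatrix_eq_zero, mul_zero]

lemma nonneg_of_isRoot_charpoly_lapMatrix {x : ℝ} (hx : (G.lapMatrix ℝ).charpoly.IsRoot x) :
    0 ≤ x := by
  rw [charpoly_lapMatrix_eq_prod, isRoot_prod_X_sub_C_iff] at hx
  obtain ⟨v, rfl⟩ := hx
  exact (G.posSemidef_lapMatrix ℝ).eigenvalues_nonneg v

lemma lapSM_eq_sum_eigenvalues_rpow (q r : ℝ) :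
    lapSM G q r = (1 / (1 - r)) * ((1 / (degSum G : ℝ)) ^ (q * (1 - r) / (1 - q)) *
      (∑ v, (lap_isHermitian G).eigenvalues v ^ q) ^ ((1 - r) / (1 - q)) - 1) := by
  have hd : 0 ≤ 1 / (degSum G : ℝ) := by positivity
  have heig := (G.posSemidef_lapMatrix ℝ).eigenvalues_nonneg
  have hsum : ∑ v, lapDensityEigen G v ^ q =
      (1 / (degSum G : ℝ)) ^ q * ∑ v, (lap_isHermitian G).eigenvalues v ^ q := by
    rw [Finset.mul_sum]
    refine Finset.sum_congr rfl fun v _ => ?_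
    rw [lapDensityEigen, div_eq_mul_one_div, mul_comm, Real.mul_rpow hd (heig v)]
  rw [lapSM, hsum, Real.mul_rpow (Real.rpow_nonneg hd q)
    (Finset.sum_nonneg fun v _ => Real.rpow_nonneg (heig v) q), ← Real.rpow_mul hd, mul_div_assoc]

end Laplacian

lemma eq_zero_of_monotone_of_charpoly_lapMatrix_eq {n : ℕ} [NeZero n] (G : SimpleGraph (Fin n))
    [DecidableRel G.Adj] {lam : Fin n → ℝ} (hmono : Monotone lam)
    (hlam : (G.lapMatrix ℝ).charpoly = ∏ j, (X - C (lam j))) : lam 0 = 0 := by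
  have hroot : ∀ x, (G.lapMatrix ℝ).charpoly.IsRoot x ↔ ∃ j, lam j = x := fun x => by
    rw [hlam, isRoot_prod_X_sub_C_iff]
  obtain ⟨j, hj⟩ := (hroot 0).1 (isRoot_charpoly_lapMatrix_zero G)
  exact le_antisymm (hj ▸ hmono (Fin.zero_le j))
    (nonneg_of_isRoot_charpoly_lapMatrix G ((hroot _).2 ⟨0, rfl⟩))

section LexProd

variable {V₁ V₂ : Type*} (G₁ : SimpleGraph V₁) (G₂ : SimpleGraph V₂)

@[simp]
lemma lexProd_adj {x y : V₁ × V₂} :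
    (lexProd G₁ G₂).Adj x y ↔ G₁.Adj x.1 y.1 ∨ (x.1 = y.1 ∧ G₂.Adj x.2 y.2) := Iff.rfl

variable [Fintype V₁] [DecidableEq V₁] [Fintype V₂] [DecidableRel G₁.Adj] [DecidableRel G₂.Adj]

lemma degree_lexProd (u : V₁) (j : V₂) :
    (lexProd G₁ G₂).degree (u, j) = Fintype.card V₂ * G₁.degree u + G₂.degree j := by
  have hsplit : ∀ u' k, (if (lexProd G₁ G₂).Adj (u, j) (u', k) then 1 else 0) =
      (if G₁.Adj u u' then 1 else 0) + if u = u' then (if G₂.Adj j k then 1 else 0) else 0 := by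
    intro u' k
    by_cases hu : u = u'
    · subst hu; simp
    · simp [hu]
  rw [← Nat.cast_id ((lexProd G₁ G₂).degree _), SimpleGraph.degree_eq_sum_if_adj,
    Fintype.sum_prod_type]
  simp only [hsplit, Finset.sum_add_distrib, Finset.sum_const, Finset.card_univ, smul_eq_mul]
  rw [← Finset.mul_sum, ← G₁.degree_eq_sum_if_adj (R := ℕ)]
  simp [← G₂.degree_eq_sum_if_adj (R := ℕ)]

variable [DecidableEq V₂]

lemma lapMatrix_lexProd (R : Type*) [CommRing R] :
    (lexProd G₁ G₂).lapMatrix R =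
      diagonal (fun u => (Fintype.card V₂ * G₁.degree u : R)) ⊗ₖ 1 + 1 ⊗ₖ G₂.lapMatrix R -
        G₁.adjMatrix R ⊗ₖ vecMulVec 1 1 := by
  ext ⟨u, j⟩ ⟨u', k⟩
  by_cases hu : u = u'
  · subst hu
    by_cases hj : j = k
    · subst hj; simp [SimpleGraph.lapMatrix, SimpleGraph.degMatrix, degree_lexProd]
    · simp [SimpleGraph.lapMatrix, SimpleGraph.degMatrix, hj]
  · simp [SimpleGraph.lapMatrix, SimpleGraph.degMatrix, hu, diagonal_apply]

lemma charpoly_lapMatrix_lexProd (R : Type*) [CommRing R] (o : V₂) :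
    ((lexProd G₁ G₂).lapMatrix R).charpoly =
      ((Fintype.card V₂ : R) • G₁.lapMatrix R).charpoly *
        ∏ u, ((Fintype.card V₂ * G₁.degree u : R) • 1 + quotOnes (G₂.lapMatrix R) o).charpoly := by
  have hconj : ∀ (A : Matrix V₁ V₁ R) (B : Matrix V₂ V₂ R),
      (1 ⊗ₖ shearInv o) * (A ⊗ₖ B) * (1 ⊗ₖ shear o) = A ⊗ₖ (shearInv o * B * shear o) := by
    intro A B
    rw [← mul_kronecker_mul, ← mul_kronecker_mul, Matrix.one_mul, Matrix.mul_one]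
  have hinv : (1 ⊗ₖ shear o) * (1 ⊗ₖ shearInv o) = (1 : Matrix (V₁ × V₂) (V₁ × V₂) R) := by
    rw [← mul_kronecker_mul, Matrix.one_mul, shear_mul_shearInv, one_kronecker_one]
  rw [← charpoly_mul_mul_of_mul_eq_one hinv, lapMatrix_lexProd, Matrix.mul_sub, Matrix.mul_add,
    Matrix.sub_mul, Matrix.add_mul, hconj, hconj, hconj, Matrix.mul_one, shearInv_mul_shear,
    charpoly_kroneckerSum_sub_kronecker
      (shearInv_mul_mul_shear_apply_self_right (G₂.lapMatrix_mulVec_const_eq_zero) o)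
      (shearInv_mul_ones_mul_shear_apply_of_ne o),
    shearInv_mul_ones_mul_shear_apply_self]
  congr 2
  ext u u'
  by_cases hu : u = u' <;> simp [SimpleGraph.lapMatrix, SimpleGraph.degMatrix, hu]

variable {G₁ G₂} {lam1 : V₁ → ℝ} {lam2 : V₂ → ℝ} {o : V₂}

lemma charpoly_lapMatrix_lexProd_eq_prod
    (hlam1 : (G₁.lapMatrix ℝ).charpoly = ∏ i, (X - C (lam1 i)))
    (hlam2 : (G₂.lapMatrix ℝ).charpoly = ∏ j, (X - C (lam2 j))) (ho : lam2 o = 0) :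
    ((lexProd G₁ G₂).lapMatrix ℝ).charpoly =
      (∏ i, (X - C (Fintype.card V₂ * lam1 i))) *
        ∏ u, ∏ j : {j // j ≠ o}, (X - C (lam2 j + Fintype.card V₂ * G₁.degree u)) := by
  have hquot := charpoly_quotOnes_eq_prod G₂.lapMatrix_mulVec_const_eq_zero hlam2 ho
  rw [charpoly_lapMatrix_lexProd G₁ G₂ ℝ o,
    charpoly_smul_eq_prod hlam1 (Nat.cast_ne_zero.2 (Fintype.card_pos_iff.2 ⟨o⟩).ne')]
  congr 1
  exact Finset.prod_congr rfl fun u _ => charpoly_smul_one_add_eq_prod hquot _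

lemma sum_eigenvalues_lapMatrix_lexProd
    (hlam1 : (G₁.lapMatrix ℝ).charpoly = ∏ i, (X - C (lam1 i)))
    (hlam2 : (G₂.lapMatrix ℝ).charpoly = ∏ j, (X - C (lam2 j))) (ho : lam2 o = 0)
    {M : Type*} [AddCommMonoid M] (F : ℝ → M) :
    ∑ v, F ((lap_isHermitian (lexProd G₁ G₂)).eigenvalues v) =
      ∑ i, F (Fintype.card V₂ * lam1 i) +
        ∑ j : {j // j ≠ o}, ∑ u, F (lam2 j + Fintype.card V₂ * G₁.degree u) := by
  let g : V₁ ⊕ ({j // j ≠ o} × V₁) → ℝ :=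
    Sum.elim (fun i => Fintype.card V₂ * lam1 i) fun p => lam2 p.1 + Fintype.card V₂ * G₁.degree p.2
  have hg : ∏ v, (X - C ((lap_isHermitian (lexProd G₁ G₂)).eigenvalues v)) =
      ∏ x, (X - C (g x)) := by
    rw [← charpoly_lapMatrix_eq_prod, charpoly_lapMatrix_lexProd_eq_prod hlam1 hlam2 ho,
      Fintype.prod_sum_type, Fintype.prod_prod_type, Finset.prod_comm]
    rfl
  rw [sum_comp_eq_of_prod_X_sub_C_eq hg F, Fintype.sum_sum_type, Fintype.sum_prod_type]
  rfl

end LexProd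

theorem lapSM_lexProd_general {n₁ n₂ : ℕ} (hn₂ : 1 ≤ n₂)
    (G₁ : SimpleGraph (Fin n₁)) (G₂ : SimpleGraph (Fin n₂))
    [DecidableRel G₁.Adj] [DecidableRel G₂.Adj]
    (lam1 : Fin n₁ → ℝ)
    (hlam1 : (G₁.lapMatrix ℝ).charpoly = ∏ i, (Polynomial.X - Polynomial.C (lam1 i)))
    (lam2 : Fin n₂ → ℝ) (hlam2mono : Monotone lam2)
    (hlam2 : (G₂.lapMatrix ℝ).charpoly = ∏ j, (Polynomial.X - Polynomial.C (lam2 j)))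
    (q r : ℝ) :
    lapSM (lexProd G₁ G₂) q r =
      (1 / (1 - r)) *
        ((1 / (degSum (lexProd G₁ G₂) : ℝ)) ^ (q * (1 - r) / (1 - q)) *
          ((∑ i, ((n₂ : ℝ) * lam1 i) ^ q) +
            ∑ j ∈ Finset.univ.filter (fun j : Fin n₂ => j.val ≠ 0), ∑ i,
              (lam2 j + (n₂ : ℝ) * (G₁.degree i : ℝ)) ^ q)
            ^ ((1 - r) / (1 - q)) - 1) := by
  have : NeZero n₂ := ⟨by omega⟩
  have h0 := eq_zero_of_monotone_of_charpoly_lapMatrix_eq G₂ hlam2mono hlam2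
  rw [lapSM_eq_sum_eigenvalues_rpow, sum_eigenvalues_lapMatrix_lexProd hlam1 hlam2 h0 (· ^ q),
    Fintype.card_fin, Finset.sum_subtype _ (p := (· ≠ (0 : Fin n₂))) (fun j => by simp)]

/-- Sharma–Mittal entropy of the lexicographic product `G₁ • G₂` with `G₁` connected on
`n₁ ≥ 2` vertices with Laplacian eigenvalues `lam1` and `G₂` any graph on `n₂` vertices with
Laplacian eigenvalues `lam2` listed in nondecreasing order; the Laplacian eigenvalues of the
product are `n₂·λ⁽¹⁾ᵢ` together with `λ⁽²⁾ⱼ + n₂·deg(uᵢ)` for `j ≥ 2`. -/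
theorem lapSM_lexProd {n₁ n₂ : ℕ} (hn₁ : 2 ≤ n₁) (hn₂ : 1 ≤ n₂)
    (G₁ : SimpleGraph (Fin n₁)) (G₂ : SimpleGraph (Fin n₂))
    [DecidableRel G₁.Adj] [DecidableRel G₂.Adj]
    (hconn : G₁.Connected)
    (lam1 : Fin n₁ → ℝ)
    (hlam1 : (G₁.lapMatrix ℝ).charpoly = ∏ i, (Polynomial.X - Polynomial.C (lam1 i)))
    (lam2 : Fin n₂ → ℝ) (hlam2mono : Monotone lam2)
    (hlam2 : (G₂.lapMatrix ℝ).charpoly = ∏ j, (Polynomial.X - Polynomial.C (lam2 j)))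
    (q r : ℝ) (hq0 : 0 < q) (hq1 : q ≠ 1) (hr : r ≠ 1) :
    lapSM (lexProd G₁ G₂) q r =
      (1 / (1 - r)) *
        ((1 / (degSum (lexProd G₁ G₂) : ℝ)) ^ (q * (1 - r) / (1 - q)) *
          ((∑ i, ((n₂ : ℝ) * lam1 i) ^ q) +
            ∑ j ∈ Finset.univ.filter (fun j : Fin n₂ => j.val ≠ 0), ∑ i,
              (lam2 j + (n₂ : ℝ) * (G₁.degree i : ℝ)) ^ q)
            ^ ((1 - r) / (1 - q)) - 1) :=
  lapSM_lexProd_general hn₂ G₁ G₂ lam1 hlam1 lam2 hlam2mono hlam2 q r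

end SMG
end
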